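/- For each t ∈ ℤ^d with F_t ≠ ∅, let K_t be the number of B_{|t|−1}-equivalence classes of F_t. Suppose that for each t with K_t ≥ 2 one chooses K_t − 1 moves z_{t,1},…,z_{t,K_t−1} with Az_{t,m}⁺ = Az_{t,m}⁻ = t, each having its positive and negative parts in two different B_{|t|−1}-equivalence classes of F_t, such that the graph whose vertices are the B_{|t|−1}-equivalence classes of F_t and whose edges join, for each chosen move, the class containing its positive part to the class containing its negative part, is a tree. Then the union over all t with K_t ≥ 2 of the sets {z_{t,1},…,z_{t,K_t−1}} is a minimal Markov basis. -/

import Mathlib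

/-!
Markov property: by strong induction on `|t|`. A move of `B_{|t|-1}` taking `z⁻ + m` to
`z⁺ + m` is the translate by `m` of a connection between `z⁻` and `z⁺`, which live in a fiber of
sample size `deg z < |t|`, so the chosen moves simulate it; between the `B_{|t|-1}`-classes of
the fiber of `t` they then walk along the tree. Only finitely many fibers have two or more classes
by Dickson's lemma, so the union is finite.

Minimality: inside the fiber of `t`, a move of degree `≥ |t|` can only be applied at its own
ends `z⁺`, `z⁻`. Hence a path built from moves avoiding a chosen `z₀` projects to a walk in the
class graph spanned by the other `K_t - 2` chosen moves; if it joined the two ends of `z₀`, that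
graph would be connected on `K_t` vertices with fewer than `K_t - 1` edges.
-/

open scoped BigOperators

section Defs

variable {ι κ : Type*} [Fintype ι]

/-- Embed a frequency vector `x ∈ ℕ^ι` into `ℤ^ι`. -/
def natToInt (x : ι → ℕ) : ι → ℤ := fun i => (x i : ℤ)

/-- The fiber of `t`: all frequency vectors `x` with `A x = t`. -/
def fiberOf (A : Matrix κ ι ℤ) (t : κ → ℤ) : Set (ι → ℕ) :=
  {x | A.mulVec (natToInt x) = t}

/-- A move for `A`: an integer vector in the kernel of `A`. -/
def IsMove (A : Matrix κ ι ℤ) (z : ι → ℤ) : Prop := A.mulVec z = 0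

/-- The positive part `z⁺` of an integer vector, as a frequency vector. -/
def posOf (z : ι → ℤ) : ι → ℕ := fun i => (z i).toNat

/-- The negative part `z⁻` of an integer vector, as a frequency vector. -/
def negOf (z : ι → ℤ) : ι → ℕ := fun i => (-z i).toNat

/-- The degree of a move: `deg z = |z⁺|`. -/
def degOf (z : ι → ℤ) : ℕ := ∑ i, posOf z i

/-- One step: add or subtract one move of `B`, staying in `ℕ^ι`. -/
def MStep (B : Set (ι → ℤ)) (x y : ι → ℕ) : Prop :=
  ∃ z ∈ B, natToInt y = natToInt x + z ∨ natToInt y = natToInt x - z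

/-- `y` is accessible from `x` by the moves of `B` (staying nonnegative throughout,
since all intermediate points are frequency vectors). -/
def Accessible (B : Set (ι → ℤ)) : (ι → ℕ) → (ι → ℕ) → Prop :=
  Relation.ReflTransGen (MStep B)

/-- A Markov basis: a finite set of moves such that every fiber forms a single
equivalence class for mutual accessibility. -/
def IsMarkovBasis (A : Matrix κ ι ℤ) (B : Set (ι → ℤ)) : Prop :=
  B.Finite ∧ (∀ z ∈ B, IsMove A z) ∧
    ∀ t : κ → ℤ, ∀ x ∈ fiberOf A t, ∀ y ∈ fiberOf A t, Accessible B x y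

/-- A minimal Markov basis: no proper subset is a Markov basis. -/
def IsMinimalMarkovBasis (A : Matrix κ ι ℤ) (B : Set (ι → ℤ)) : Prop :=
  IsMarkovBasis A B ∧ ∀ B' ⊂ B, ¬ IsMarkovBasis A B'

/-- An indispensable monomial: every Markov basis contains a move whose
positive or negative part is `x`. -/
def IsIndispensableMonomial (A : Matrix κ ι ℤ) (x : ι → ℕ) : Prop :=
  ∀ B : Set (ι → ℤ), IsMarkovBasis A B → ∃ z ∈ B, posOf z = x ∨ negOf z = x

/-- `B_n`: the set of moves of degree at most `n`. -/
def Bmoves (A : Matrix κ ι ℤ) (n : ℕ) : Set (ι → ℤ) :=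
  {z | IsMove A z ∧ degOf z ≤ n}

/-- The sample size `|t|` of a sufficient statistic `t` (well defined on nonempty
fibers under homogeneity). -/
noncomputable def sampleSize (A : Matrix κ ι ℤ) (t : κ → ℤ) : ℕ :=
  sInf {n | ∃ x ∈ fiberOf A t, ∑ i, x i = n}

/-- The `B_{|t|-1}`-equivalence classes of the fiber of `t`. -/
noncomputable def fiberClasses (A : Matrix κ ι ℤ) (t : κ → ℤ) : Set (Set (ι → ℕ)) :=
  {C | ∃ x ∈ fiberOf A t,
    C = {y | y ∈ fiberOf A t ∧ Accessible (Bmoves A (sampleSize A t - 1)) x y}}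

/-- Homogeneity: some rational vector `w` has `w ⬝ aᵢ = 1` for every column `aᵢ`. -/
def IsHomogeneousMatrix [Fintype κ] (A : Matrix κ ι ℤ) : Prop :=
  ∃ w : κ → ℚ, ∀ i : ι, ∑ j, w j * (A j i : ℚ) = 1

end Defs

/-- `B_t`: the set of moves `z` with `A z⁺ = A z⁻ = t`. -/
def movesOfFiber {p d : ℕ} (A : Matrix (Fin d) (Fin p) ℤ) (t : Fin d → ℤ) :
    Set (Fin p → ℤ) :=
  {z | IsMove A z ∧ A.mulVec (natToInt (posOf z)) = t ∧ A.mulVec (natToInt (negOf z)) = t}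


variable {ι κ : Type*}

section Moves

variable {A : Matrix κ ι ℤ} {B B' : Set (ι → ℤ)} {t : κ → ℤ} {x y m : ι → ℕ} {z : ι → ℤ}

lemma natToInt_add (x y : ι → ℕ) : natToInt (x + y) = natToInt x + natToInt y := by
  funext i
  simp [natToInt]

lemma natToInt_posOf_sub_natToInt_negOf (z : ι → ℤ) :
    natToInt (posOf z) - natToInt (negOf z) = z := by
  funext i
  simp only [natToInt, posOf, negOf, Pi.sub_apply]
  omega

lemma posOf_neg (z : ι → ℤ) : posOf (-z) = negOf z := rfl

lemma negOf_neg (z : ι → ℤ) : negOf (-z) = posOf z := by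
  funext i
  simp [negOf, posOf]

lemma MStep.symm (h : MStep B x y) : MStep B y x := by
  obtain ⟨z, hz, h | h⟩ := h
  · exact ⟨z, hz, Or.inr (by rw [h]; abel)⟩
  · exact ⟨z, hz, Or.inl (by rw [h]; abel)⟩

lemma Accessible.symm (h : Accessible B x y) : Accessible B y x := by
  induction h with
  | refl => exact .refl
  | tail _ hstep ih => exact ih.head hstep.symm

lemma Accessible.mono (hBB' : B ⊆ B') (h : Accessible B x y) : Accessible B' x y :=
  Relation.ReflTransGen.mono (fun _ _ ⟨z, hz, h⟩ => ⟨z, hBB' hz, h⟩) _ _ h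

lemma Accessible.add_right (h : Accessible B x y) (m : ι → ℕ) :
    Accessible B (x + m) (y + m) := by
  induction h with
  | refl => exact .refl
  | tail _ hstep ih =>
    obtain ⟨z, hz, h | h⟩ := hstep
    · exact ih.tail ⟨z, hz, Or.inl (by rw [natToInt_add, natToInt_add, h]; abel)⟩
    · exact ih.tail ⟨z, hz, Or.inr (by rw [natToInt_add, natToInt_add, h]; abel)⟩

lemma mstep_posOf_negOf (hz : z ∈ B) : MStep B (posOf z) (negOf z) :=
  ⟨z, hz, Or.inr ((sub_sub_cancel _ _).symm.trans
    (by rw [natToInt_posOf_sub_natToInt_negOf]))⟩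

/-- A step by `±z` leaves the common part `m = min x y` in place and exchanges `z⁻` and `z⁺`. -/
lemma exists_eq_add_of_step (h : natToInt y = natToInt x + z ∨ natToInt y = natToInt x - z) :
    ∃ m, (x = negOf z + m ∧ y = posOf z + m) ∨ (x = posOf z + m ∧ y = negOf z + m) := by
  have key : ∀ z : ι → ℤ, natToInt y = natToInt x + z →
      x = negOf z + (x - negOf z) ∧ y = posOf z + (x - negOf z) := by
    intro z h
    constructor <;> funext i <;> have := congrFun h i <;>
      simp only [natToInt, negOf, posOf, Pi.add_apply, Pi.sub_apply] at this ⊢ <;> omega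
  rcases h with h | h
  · exact ⟨_, Or.inl (key z h)⟩
  · have := key (-z) (by rw [h, sub_eq_add_neg])
    rw [negOf_neg, posOf_neg] at this
    exact ⟨_, Or.inr this⟩

variable [Fintype ι]

lemma IsMove.mulVec_posOf (hz : IsMove A z) :
    A.mulVec (natToInt (posOf z)) = A.mulVec (natToInt (negOf z)) := by
  rw [← sub_eq_zero, ← Matrix.mulVec_sub, natToInt_posOf_sub_natToInt_negOf]
  exact hz

lemma mem_fiberOf_of_mstep (hB : ∀ z ∈ B, IsMove A z) (hx : x ∈ fiberOf A t)
    (h : MStep B x y) : y ∈ fiberOf A t := by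
  obtain ⟨z, hz, h | h⟩ := h
  · change A.mulVec _ = t
    rw [h, Matrix.mulVec_add, (hB z hz : A.mulVec z = 0), add_zero]
    exact hx
  · change A.mulVec _ = t
    rw [h, Matrix.mulVec_sub, (hB z hz : A.mulVec z = 0), sub_zero]
    exact hx

lemma mem_fiberOf_of_accessible (hB : ∀ z ∈ B, IsMove A z) (hx : x ∈ fiberOf A t)
    (h : Accessible B x y) : y ∈ fiberOf A t := by
  induction h with
  | refl => exact hx
  | tail _ hstep ih => exact mem_fiberOf_of_mstep hB ih hstep

lemma mstep_Bmoves_add {s : κ → ℤ} {u v : ι → ℕ} (hu : u ∈ fiberOf A s) (hv : v ∈ fiberOf A s)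
    {n : ℕ} (hn : ∑ i, v i ≤ n) (c : ι → ℕ) : MStep (Bmoves A n) (u + c) (v + c) := by
  refine ⟨natToInt v - natToInt u, ⟨?_, ?_⟩, Or.inl ?_⟩
  · rw [IsMove, Matrix.mulVec_sub, hu, hv, sub_self]
  · refine le_trans (Finset.sum_le_sum fun i _ => ?_) hn
    simp only [posOf, natToInt, Pi.sub_apply]
    omega
  · rw [natToInt_add, natToInt_add]
    abel

end Moves

section Homogeneous

variable [Fintype ι] [Fintype κ] {A : Matrix κ ι ℤ} {t : κ → ℤ} {x y : ι → ℕ} {z : ι → ℤ}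

/-- If `w ⬝ aᵢ = 1` for all columns, then `|x| = w ⬝ (A x)`. -/
lemma sum_eq_of_mem_fiberOf (hA : IsHomogeneousMatrix A) (hx : x ∈ fiberOf A t)
    (hy : y ∈ fiberOf A t) : ∑ i, x i = ∑ i, y i := by
  obtain ⟨w, hw⟩ := hA
  have key : ∀ u : ι → ℕ, ((∑ i, u i : ℕ) : ℚ) = ∑ j, w j * (A.mulVec (natToInt u) j : ℚ) := by
    intro u
    calc ((∑ i, u i : ℕ) : ℚ) = ∑ i, (u i : ℚ) * ∑ j, w j * (A j i : ℚ) := by simp [hw]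
      _ = ∑ j, w j * ∑ i, (A j i : ℚ) * (u i : ℚ) := by
        simp_rw [Finset.mul_sum]
        rw [Finset.sum_comm]
        exact Finset.sum_congr rfl fun j _ => Finset.sum_congr rfl fun i _ => by ring
      _ = ∑ j, w j * (A.mulVec (natToInt u) j : ℚ) := by
        simp [Matrix.mulVec, dotProduct, natToInt]
  have hxy : A.mulVec (natToInt x) = A.mulVec (natToInt y) := hx.trans hy.symm
  have := key x
  rw [hxy, ← key y] at this
  exact_mod_cast this

lemma sampleSize_eq (hA : IsHomogeneousMatrix A) (hx : x ∈ fiberOf A t) :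
    sampleSize A t = ∑ i, x i := by
  have : {n | ∃ y ∈ fiberOf A t, ∑ i, y i = n} = {∑ i, x i} := by
    ext n
    constructor
    · rintro ⟨y, hy, rfl⟩
      exact sum_eq_of_mem_fiberOf hA hy hx
    · rintro rfl
      exact ⟨x, hx, rfl⟩
  rw [sampleSize, this, csInf_singleton]

lemma sampleSize_mulVec (hA : IsHomogeneousMatrix A) (x : ι → ℕ) :
    sampleSize A (A.mulVec (natToInt x)) = ∑ i, x i :=
  sampleSize_eq hA rfl

lemma sum_negOf_eq_degOf (hA : IsHomogeneousMatrix A) (hz : IsMove A z) :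
    ∑ i, negOf z i = degOf z :=
  sum_eq_of_mem_fiberOf hA (t := A.mulVec (natToInt (negOf z))) rfl hz.mulVec_posOf

lemma sum_pos_of_ne (hA : IsHomogeneousMatrix A) (hx : x ∈ fiberOf A t) (hy : y ∈ fiberOf A t)
    (hxy : x ≠ y) : 0 < ∑ i, x i := by
  by_contra! h
  have hy0 : ∑ i, y i = 0 := by rw [← sum_eq_of_mem_fiberOf hA hx hy]; omega
  have hx0 : ∑ i, x i = 0 := by omega
  exact hxy (funext fun i => (Finset.sum_eq_zero_iff.1 hx0 i (Finset.mem_univ i)).trans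
    (Finset.sum_eq_zero_iff.1 hy0 i (Finset.mem_univ i)).symm)

lemma fiberOf_finite (hA : IsHomogeneousMatrix A) (t : κ → ℤ) : (fiberOf A t).Finite := by
  classical
  refine (fiberOf A t).eq_empty_or_nonempty.elim (fun h => h ▸ Set.finite_empty) ?_
  rintro ⟨x, hx⟩
  refine (Finset.piAntidiag Finset.univ (∑ i, x i)).finite_toSet.subset fun y hy => ?_
  simp [sum_eq_of_mem_fiberOf hA hy hx]

end Homogeneous

section Classes

variable [Fintype ι] {A : Matrix κ ι ℤ} {t : κ → ℤ} {C D : Set (ι → ℕ)}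
  {u v x y : ι → ℕ}

lemma exists_mem_fiberClasses (hx : x ∈ fiberOf A t) : ∃ C : fiberClasses A t, x ∈ C.1 :=
  ⟨⟨_, x, hx, rfl⟩, hx, .refl⟩

lemma accessible_of_mem_fiberClasses (hC : C ∈ fiberClasses A t) (hu : u ∈ C) (hv : v ∈ C) :
    Accessible (Bmoves A (sampleSize A t - 1)) u v := by
  obtain ⟨x, -, rfl⟩ := hC
  exact hu.2.symm.trans hv.2

lemma mem_fiberClasses_of_accessible (hC : C ∈ fiberClasses A t) (hu : u ∈ C)
    (h : Accessible (Bmoves A (sampleSize A t - 1)) u v) : v ∈ C := by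
  obtain ⟨x, -, rfl⟩ := hC
  exact ⟨mem_fiberOf_of_accessible (fun _ hz => hz.1) hu.1 h, hu.2.trans h⟩

lemma fiberClasses_eq_of_mem (hC : C ∈ fiberClasses A t) (hD : D ∈ fiberClasses A t)
    (hxC : x ∈ C) (hxD : x ∈ D) : C = D := by
  ext y
  exact ⟨fun hy => mem_fiberClasses_of_accessible hD hxD (accessible_of_mem_fiberClasses hC hxC hy),
    fun hy => mem_fiberClasses_of_accessible hC hxC (accessible_of_mem_fiberClasses hD hxD hy)⟩

lemma fiberClasses_finite [Fintype κ] (hA : IsHomogeneousMatrix A) (t : κ → ℤ) :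
    (fiberClasses A t).Finite :=
  ((fiberOf_finite hA t).image _).subset fun _ ⟨x, hx, hC⟩ => ⟨x, hx, hC.symm⟩

lemma accessible_of_ncard_fiberClasses_lt_two [Fintype κ] (hA : IsHomogeneousMatrix A)
    (h : (fiberClasses A t).ncard < 2) (hx : x ∈ fiberOf A t) (hy : y ∈ fiberOf A t) :
    Accessible (Bmoves A (sampleSize A t - 1)) x y := by
  obtain ⟨C, hxC⟩ := exists_mem_fiberClasses hx
  obtain ⟨D, hyD⟩ := exists_mem_fiberClasses hy
  have hCD : C.1 = D.1 := (Set.ncard_le_one_iff (fiberClasses_finite hA t)).1 (by omega) C.2 D.2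
  exact accessible_of_mem_fiberClasses C.2 hxC (hCD ▸ hyD)

lemma exists_not_accessible_of_two_le_ncard (h : 2 ≤ (fiberClasses A t).ncard) :
    ∃ x ∈ fiberOf A t, ∃ y ∈ fiberOf A t, ¬ Accessible (Bmoves A (sampleSize A t - 1)) x y := by
  obtain ⟨C, D, hC, hD, hCD⟩ :=
    (Set.one_lt_ncard_iff (Set.finite_of_ncard_pos (by omega))).1 h
  obtain ⟨x, hx, rfl⟩ := id hC
  obtain ⟨y, hy, rfl⟩ := id hD
  refine ⟨x, hx, y, hy, fun hxy => hCD (fiberClasses_eq_of_mem hC hD ⟨hy, hxy⟩ ⟨hy, .refl⟩)⟩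

end Classes

namespace SimpleGraph

variable {V α : Type*}

lemma reachable_fromRel_of_rel {r : V → V → Prop} {a b : V} (h : r a b) :
    (fromRel r).Reachable a b := by
  by_cases hab : a = b
  · exact hab ▸ Reachable.refl a
  · exact ((fromRel_adj r a b).2 ⟨hab, Or.inl h⟩).reachable

variable {R : α → V → V → Prop} {L : Set α}

lemma card_edgeSet_fromRel_le (hR : ∀ l a b a' b', R l a b → R l a' b' → a = a' ∧ b = b')
    (hL : L.Finite) : Nat.card (fromRel fun a b => ∃ l ∈ L, R l a b).edgeSet ≤ L.ncard := by
  have hlabel : ∀ e : (fromRel fun a b => ∃ l ∈ L, R l a b).edgeSet,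
      ∃ l : L, ∃ a b, e.1 = s(a, b) ∧ R l a b := by
    rintro ⟨e, he⟩
    induction e using Sym2.ind with
    | _ a b =>
      obtain ⟨-, ⟨l, hl, h⟩ | ⟨l, hl, h⟩⟩ := he
      · exact ⟨⟨l, hl⟩, a, b, rfl, h⟩
      · exact ⟨⟨l, hl⟩, b, a, Sym2.eq_swap, h⟩
  choose f a b he hf using hlabel
  have : Finite L := hL.to_subtype
  rw [← Nat.card_coe_set_eq]
  refine Nat.card_le_card_of_injective f fun e e' hee' => Subtype.ext ?_
  obtain ⟨ha, hb⟩ := hR _ _ _ _ _ (hf e) (hee' ▸ hf e')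
  rw [he, he e', ha, hb]

/-- Since a connected graph on `n` vertices has at least `n - 1` edges, fewer than `n` labels
leave no label to spare. -/
theorem not_reachable_fromRel_diff_singleton
    (hR : ∀ l a b a' b', R l a b → R l a' b' → a = a' ∧ b = b') (hL : L.Finite)
    (hconn : (fromRel fun a b => ∃ l ∈ L, R l a b).Connected) (hcard : L.ncard < Nat.card V)
    {l₀ : α} (hl₀ : l₀ ∈ L) {a b : V} (hab : R l₀ a b) :
    ¬ (fromRel fun a b => ∃ l ∈ L \ {l₀}, R l a b).Reachable a b := by
  set G' := fromRel fun a b => ∃ l ∈ L \ {l₀}, R l a b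
  intro hreach
  have hrel : ∀ l ∈ L, ∀ u v, R l u v → G'.Reachable u v := by
    intro l hl u v h
    by_cases hll₀ : l = l₀
    · subst hll₀
      obtain ⟨rfl, rfl⟩ := hR _ _ _ _ _ hab h
      exact hreach
    · exact reachable_fromRel_of_rel ⟨l, ⟨hl, hll₀⟩, h⟩
  have hconn' : G'.Connected := by
    refine @Connected.mk _ _ (fun u v => ?_) hconn.nonempty
    rw [reachable_iff_reflTransGen]
    refine Relation.ReflTransGen.lift' id (fun u v huv => ?_) _ _
      ((reachable_iff_reflTransGen _ _).1 (hconn.preconnected u v))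
    obtain ⟨-, ⟨l, hl, h⟩ | ⟨l, hl, h⟩⟩ := huv
    · exact (reachable_iff_reflTransGen _ _).1 (hrel l hl u v h)
    · exact (reachable_iff_reflTransGen _ _).1 (hrel l hl v u h).symm
  have hedges : Nat.card G'.edgeSet ≤ (L \ {l₀}).ncard := card_edgeSet_fromRel_le hR hL.sdiff
  have hdiff := Set.ncard_sdiff_singleton_add_one hl₀ hL
  have := hconn'.card_vert_le_card_edgeSet_add_one
  omega

end SimpleGraph

def classGraph [Fintype ι] (A : Matrix κ ι ℤ) (t : κ → ℤ) (W : Set (ι → ℤ)) :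
    SimpleGraph (fiberClasses A t) :=
  SimpleGraph.fromRel fun C D => ∃ z ∈ W, posOf z ∈ C.1 ∧ negOf z ∈ D.1

section Markov

variable [Fintype ι] {A : Matrix κ ι ℤ} {B W : Set (ι → ℤ)} {t : κ → ℤ}
  {b c u v : ι → ℕ}

lemma accessible_of_reachable_classGraph (hW : W ⊆ B) {C D : fiberClasses A t}
    (h : (classGraph A t W).Reachable C D) (hu : u ∈ C.1) (hv : v ∈ D.1) :
    Accessible (B ∪ Bmoves A (sampleSize A t - 1)) u v := by
  rw [SimpleGraph.reachable_iff_reflTransGen] at h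
  induction h generalizing v with
  | refl => exact (accessible_of_mem_fiberClasses C.2 hu hv).mono Set.subset_union_right
  | @tail E D _ hED ih =>
    have hclass : ∀ {x y}, x ∈ D.1 → y ∈ D.1 → Accessible (B ∪ Bmoves A (sampleSize A t - 1)) x y :=
      fun hx hy => (accessible_of_mem_fiberClasses D.2 hx hy).mono Set.subset_union_right
    obtain ⟨-, ⟨z, hz, hzE, hzD⟩ | ⟨z, hz, hzD, hzE⟩⟩ := hED
    · exact ((ih hzE).tail (mstep_posOf_negOf (Or.inl (hW hz)))).trans (hclass hzD hv)
    · exact ((ih hzE).tail (mstep_posOf_negOf (Or.inl (hW hz))).symm).trans (hclass hzD hv)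

lemma accessible_of_mstep_Bmoves [Fintype κ] (hA : IsHomogeneousMatrix A)
    (IH : ∀ s, sampleSize A s < sampleSize A t →
      ∀ x ∈ fiberOf A s, ∀ y ∈ fiberOf A s, Accessible B x y)
    (hb : b ∈ fiberOf A t) (h : MStep (Bmoves A (sampleSize A t - 1)) b c) :
    Accessible B b c := by
  have hc := mem_fiberOf_of_mstep (fun _ hz => hz.1) hb h
  obtain ⟨z, ⟨hz, hdeg⟩, hstep⟩ := h
  rcases eq_or_ne b c with rfl | hbc
  · exact .refl
  have hpos := sum_pos_of_ne hA hb hc hbc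
  have hlt : sampleSize A (A.mulVec (natToInt (negOf z))) < sampleSize A t := by
    rw [sampleSize_mulVec hA, sum_negOf_eq_degOf hA hz, sampleSize_eq hA hb]
    rw [sampleSize_eq hA hb] at hdeg
    omega
  have hacc := IH _ hlt (negOf z) rfl (posOf z) hz.mulVec_posOf
  obtain ⟨m, ⟨rfl, rfl⟩ | ⟨rfl, rfl⟩⟩ := exists_eq_add_of_step hstep
  · exact hacc.add_right m
  · exact hacc.symm.add_right m

theorem accessible_of_accessible_union_Bmoves [Fintype κ] (hA : IsHomogeneousMatrix A)
    (hB : ∀ z ∈ B, IsMove A z)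
    (h : ∀ t, ∀ x ∈ fiberOf A t, ∀ y ∈ fiberOf A t,
      Accessible (B ∪ Bmoves A (sampleSize A t - 1)) x y)
    (t : κ → ℤ) : ∀ x ∈ fiberOf A t, ∀ y ∈ fiberOf A t, Accessible B x y := by
  induction t using (measure (sampleSize A)).wf.induction with
  | _ t IH =>
  intro x hx y hy
  have hmoves : ∀ z ∈ B ∪ Bmoves A (sampleSize A t - 1), IsMove A z :=
    fun z hz => hz.elim (hB z) (·.1)
  induction h t x hx y hy with
  | refl => exact .refl
  | tail hxb hbc ih =>
    refine (ih (mem_fiberOf_of_accessible hmoves hx hxb)).trans ?_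
    obtain ⟨z, hz | hz, hstep⟩ := hbc
    · exact .single ⟨z, hz, hstep⟩
    · exact accessible_of_mstep_Bmoves hA IH (mem_fiberOf_of_accessible hmoves hx hxb)
        ⟨z, hz, hstep⟩

end Markov

section Finiteness

variable [Fintype ι] [Fintype κ] {A : Matrix κ ι ℤ} {t t' : κ → ℤ} {x y x' y' : ι → ℕ}

/-- Writing `x' = x + c` and `y' = y + c'`, the path `x + c → y + c → y + c'` uses the moves
`y - x` and `c' - c`, whose degrees are at most `|y| < |t'|` and `|c'| < |t'|`. -/
lemma accessible_Bmoves_of_le (hA : IsHomogeneousMatrix A) (hx : x ∈ fiberOf A t)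
    (hy : y ∈ fiberOf A t) (hxy : x ≠ y) (hx' : x' ∈ fiberOf A t') (hy' : y' ∈ fiberOf A t')
    (hxx' : x ≤ x') (hyy' : y ≤ y') (htt' : t ≠ t') :
    Accessible (Bmoves A (sampleSize A t' - 1)) x' y' := by
  obtain ⟨c, rfl⟩ := exists_add_of_le hxx'
  obtain ⟨c', rfl⟩ := exists_add_of_le hyy'
  have hc : c ∈ fiberOf A (t' - t) := by
    change A.mulVec _ = _
    rw [← hx', ← hx, natToInt_add, Matrix.mulVec_add, add_sub_cancel_left]
  have hc' : c' ∈ fiberOf A (t' - t) := by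
    change A.mulVec _ = _
    rw [← hy', ← hy, natToInt_add, Matrix.mulVec_add, add_sub_cancel_left]
  have hc0 : 0 < ∑ i, c i := by
    refine Nat.pos_of_ne_zero fun h0 => htt' ?_
    have : c = 0 := funext fun i => Finset.sum_eq_zero_iff.1 h0 i (Finset.mem_univ i)
    rw [← hx, ← hx', this, add_zero]
  have hsize : sampleSize A t' = ∑ i, y i + ∑ i, c' i := by
    rw [sampleSize_eq hA hy']
    simp only [Pi.add_apply, Finset.sum_add_distrib]
  have hxy_sum := sum_eq_of_mem_fiberOf hA hx hy
  have hcc' := sum_eq_of_mem_fiberOf hA hc hc'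
  have hy0 := sum_pos_of_ne hA hx hy hxy
  have step₁ := mstep_Bmoves_add hx hy (n := sampleSize A t' - 1) (by omega) c
  have step₂ := mstep_Bmoves_add hc hc' (n := sampleSize A t' - 1) (by omega) y
  rw [add_comm c, add_comm c'] at step₂
  exact .tail (.single step₁) step₂

/-- Dickson's lemma: an infinite family of pairs `(x, y)` of `B_{|t|-1}`-inaccessible points
would contain two comparable pairs, contradicting `accessible_Bmoves_of_le`. -/
theorem finite_setOf_two_le_ncard_fiberClasses (hA : IsHomogeneousMatrix A) :
    {t : κ → ℤ | 2 ≤ (fiberClasses A t).ncard}.Finite := by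
  by_contra hinf
  let e := Set.Infinite.natEmbedding _ hinf
  choose x hx y hy hxy using fun s : {t : κ → ℤ | 2 ≤ (fiberClasses A t).ncard} =>
    exists_not_accessible_of_two_le_ncard s.2
  obtain ⟨m, n, hmn, hle⟩ := wellQuasiOrdered_le fun k => (x (e k), y (e k))
  have hne : x (e m) ≠ y (e m) := fun h => hxy (e m) (h ▸ .refl)
  have htt : (e m : κ → ℤ) ≠ e n := fun h => hmn.ne (e.injective (Subtype.ext h))
  exact hxy (e n) (accessible_Bmoves_of_le hA (hx _) (hy _) hne (hx _) (hy _) hle.1 hle.2 htt)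

end Finiteness

theorem isMarkovBasis_biUnion [Fintype ι] [Fintype κ] {A : Matrix κ ι ℤ}
    (hA : IsHomogeneousMatrix A) {Z : (κ → ℤ) → Set (ι → ℤ)}
    (hZ : ∀ t, 2 ≤ (fiberClasses A t).ncard →
      (∀ z ∈ Z t, IsMove A z) ∧ (Z t).Finite ∧ (classGraph A t (Z t)).Connected) :
    IsMarkovBasis A (⋃ t ∈ {t | 2 ≤ (fiberClasses A t).ncard}, Z t) := by
  have hmove : ∀ z ∈ ⋃ t ∈ {t | 2 ≤ (fiberClasses A t).ncard}, Z t, IsMove A z := by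
    simp only [Set.mem_iUnion]
    rintro z ⟨t, ht, hz⟩
    exact (hZ t ht).1 z hz
  refine ⟨(finite_setOf_two_le_ncard_fiberClasses hA).biUnion fun t ht => (hZ t ht).2.1, hmove,
    accessible_of_accessible_union_Bmoves hA hmove fun t x hx y hy => ?_⟩
  by_cases ht : 2 ≤ (fiberClasses A t).ncard
  · obtain ⟨C, hxC⟩ := exists_mem_fiberClasses hx
    obtain ⟨D, hyD⟩ := exists_mem_fiberClasses hy
    exact accessible_of_reachable_classGraph (Set.subset_biUnion_of_mem (u := Z) ht)
      ((hZ t ht).2.2.preconnected C D) hxC hyD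
  · exact (accessible_of_ncard_fiberClasses_lt_two hA (by omega) hx hy).mono
      Set.subset_union_right

section Minimality

variable [Fintype ι] {A : Matrix κ ι ℤ} {B W : Set (ι → ℤ)} {t : κ → ℤ}
  {b c u v : ι → ℕ} {z : ι → ℤ}

lemma eq_posOf_negOf_of_le_degOf [Fintype κ] (hA : IsHomogeneousMatrix A) (hz : IsMove A z)
    (hb : b ∈ fiberOf A t) (hdeg : sampleSize A t ≤ degOf z)
    (h : natToInt c = natToInt b + z ∨ natToInt c = natToInt b - z) :
    (b = negOf z ∧ c = posOf z) ∨ (b = posOf z ∧ c = negOf z) := by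
  obtain ⟨m, hm⟩ := exists_eq_add_of_step h
  suffices m = 0 by simpa only [this, add_zero] using hm
  have hsum : ∑ i, b i = degOf z + ∑ i, m i := by
    rcases hm with ⟨rfl, -⟩ | ⟨rfl, -⟩
    · simp only [Pi.add_apply, Finset.sum_add_distrib, sum_negOf_eq_degOf hA hz]
    · simp only [Pi.add_apply, Finset.sum_add_distrib, degOf]
  rw [sampleSize_eq hA hb] at hdeg
  exact funext fun i => Finset.sum_eq_zero_iff.1 (by omega) i (Finset.mem_univ i)

lemma reachable_classGraph_of_accessible [Fintype κ] (hA : IsHomogeneousMatrix A)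
    (hB : ∀ z ∈ B, IsMove A z)
    (hW : ∀ z ∈ B, sampleSize A t ≤ degOf z → negOf z ∈ fiberOf A t → z ∈ W)
    (h : Accessible B u v) (hu : u ∈ fiberOf A t) {C D : fiberClasses A t}
    (huC : u ∈ C.1) (hvD : v ∈ D.1) : (classGraph A t W).Reachable C D := by
  induction h generalizing D with
  | refl => exact Subtype.ext (fiberClasses_eq_of_mem C.2 D.2 huC hvD) ▸ .refl C
  | @tail b c hub hbc ih =>
    have hb := mem_fiberOf_of_accessible hB hu hub
    obtain ⟨E, hbE⟩ := exists_mem_fiberClasses hb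
    refine (ih hbE).trans ?_
    obtain ⟨z, hzB, hstep⟩ := hbc
    by_cases hdeg : degOf z ≤ sampleSize A t - 1
    · have hcE := mem_fiberClasses_of_accessible E.2 hbE (.single ⟨z, ⟨hB z hzB, hdeg⟩, hstep⟩)
      exact Subtype.ext (fiberClasses_eq_of_mem E.2 D.2 hcE hvD) ▸ .refl E
    rcases eq_posOf_negOf_of_le_degOf hA (hB z hzB) hb (by omega) hstep with
      ⟨rfl, rfl⟩ | ⟨rfl, rfl⟩
    · exact (SimpleGraph.reachable_fromRel_of_rel ⟨z, hW z hzB (by omega) hb, hvD, hbE⟩).symm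
    · have hneg : negOf z ∈ fiberOf A t := (hB z hzB).mulVec_posOf.symm.trans hb
      exact SimpleGraph.reachable_fromRel_of_rel ⟨z, hW z hzB (by omega) hneg, hbE, hvD⟩

lemma not_reachable_classGraph_diff_singleton (hW : W.Finite)
    (hconn : (classGraph A t W).Connected) (hcard : W.ncard < (fiberClasses A t).ncard)
    {z₀ : ι → ℤ} (hz₀ : z₀ ∈ W) {C D : fiberClasses A t} (hC : posOf z₀ ∈ C.1)
    (hD : negOf z₀ ∈ D.1) : ¬ (classGraph A t (W \ {z₀})).Reachable C D :=
  SimpleGraph.not_reachable_fromRel_diff_singleton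
    (fun _ C D C' D' h h' => ⟨Subtype.ext (fiberClasses_eq_of_mem C.2 C'.2 h.1 h'.1),
      Subtype.ext (fiberClasses_eq_of_mem D.2 D'.2 h.2 h'.2)⟩)
    hW hconn (by rwa [Nat.card_coe_set_eq]) hz₀ ⟨hC, hD⟩

end Minimality

theorem chosen_tree_moves_form_minimal_MarkovBasis_general
    {p d : ℕ}
    (A : Matrix (Fin d) (Fin p) ℤ) (hA : IsHomogeneousMatrix A)
    (Z : (Fin d → ℤ) → Set (Fin p → ℤ))
    (hZ : ∀ t : Fin d → ℤ, 2 ≤ (fiberClasses A t).ncard →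
      Z t ⊆ movesOfFiber A t ∧
      (Z t).ncard = (fiberClasses A t).ncard - 1 ∧
      (∀ z ∈ Z t, ¬ Accessible (Bmoves A (sampleSize A t - 1)) (posOf z) (negOf z)) ∧
      (SimpleGraph.fromRel (fun C₁ C₂ : ↥(fiberClasses A t) =>
          ∃ z ∈ Z t, posOf z ∈ C₁.1 ∧ negOf z ∈ C₂.1)).IsTree) :
    IsMinimalMarkovBasis A
      (⋃ t ∈ {t : Fin d → ℤ | 2 ≤ (fiberClasses A t).ncard}, Z t) := by
  have hZfin : ∀ t, 2 ≤ (fiberClasses A t).ncard → (Z t).Finite :=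
    fun t ht => Set.finite_of_ncard_pos (by have := (hZ t ht).2.1; omega)
  have hMarkov := isMarkovBasis_biUnion hA fun t ht =>
    ⟨fun z hz => ((hZ t ht).1 hz).1, hZfin t ht, (hZ t ht).2.2.2.connected⟩
  refine ⟨hMarkov, fun B' hB' hB'Markov => ?_⟩
  obtain ⟨z₀, hz₀, hz₀B'⟩ := Set.exists_of_ssubset hB'
  obtain ⟨t₀, ht₀, hz₀Z⟩ := Set.mem_iUnion₂.1 hz₀
  obtain ⟨hsub, hcard, -, htree⟩ := hZ t₀ ht₀
  obtain ⟨-, hpos, hneg⟩ := hsub hz₀Z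
  obtain ⟨C, hC⟩ := exists_mem_fiberClasses hpos
  obtain ⟨D, hD⟩ := exists_mem_fiberClasses hneg
  have ht₀' : 2 ≤ (fiberClasses A t₀).ncard := ht₀
  refine not_reachable_classGraph_diff_singleton (hZfin t₀ ht₀) htree.connected (by omega)
    hz₀Z hC hD (reachable_classGraph_of_accessible hA hB'Markov.2.1 (fun z hz _ hzneg => ?_)
      (hB'Markov.2.2 t₀ _ hpos _ hneg) hpos hC hD)
  obtain ⟨t, ht, hzZ⟩ := Set.mem_iUnion₂.1 (hB'.subset hz)
  obtain rfl : t = t₀ := ((hZ t ht).1 hzZ).2.2.symm.trans hzneg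
  exact ⟨hzZ, fun h => hz₀B' (h ▸ hz)⟩

/-- choosing, for each `t` with at least two `B_{|t|-1}`-equivalence
classes, `K_t - 1` moves of `B_t` connecting different classes so that the induced
graph on the classes is a tree, the union of all chosen moves is a minimal Markov
basis. -/
theorem chosen_tree_moves_form_minimal_MarkovBasis
    {p d : ℕ} (hp : 0 < p) (hd : 0 < d)
    (A : Matrix (Fin d) (Fin p) ℤ) (hA : IsHomogeneousMatrix A)
    (Z : (Fin d → ℤ) → Set (Fin p → ℤ))
    (hZ : ∀ t : Fin d → ℤ, 2 ≤ (fiberClasses A t).ncard →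
      Z t ⊆ movesOfFiber A t ∧
      (Z t).ncard = (fiberClasses A t).ncard - 1 ∧
      (∀ z ∈ Z t, ¬ Accessible (Bmoves A (sampleSize A t - 1)) (posOf z) (negOf z)) ∧
      (SimpleGraph.fromRel (fun C₁ C₂ : ↥(fiberClasses A t) =>
          ∃ z ∈ Z t, posOf z ∈ C₁.1 ∧ negOf z ∈ C₂.1)).IsTree) :
    IsMinimalMarkovBasis A
      (⋃ t ∈ {t : Fin d → ℤ | 2 ≤ (fiberClasses A t).ncard}, Z t) :=
  chosen_tree_moves_form_minimal_MarkovBasis_general A hA Z hZ
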